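/- arXiv:2110.13176 — 3 statements merged into one kernel-verified Lean document; each statement's English description precedes it below -/
import Mathlib

section
/- Let $\lambda_1,\lambda_2,\lambda_3,\lambda_4$ and $v_1,v_2,v_3,v_4$ be real numbers satisfying the system $(\lambda_1-\lambda_2)v_1 v_2 + (\lambda_3-\lambda_4)v_3 v_4 = 0$, $(\lambda_1-\lambda_3)v_1 v_3 + (\lambda_4-\lambda_2)v_4 v_2 = 0$, $(\lambda_1-\lambda_4)v_1 v_4 + (\lambda_2-\lambda_3)v_2 v_3 = 0$. If all $v_j \neq 0$, then $\lambda_1 = \lambda_2 = \lambda_3 = \lambda_4$. -/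
/-- If `(λ₁-λ₂)v₁v₂ + (λ₃-λ₄)v₃v₄ = 0`,
`(λ₁-λ₃)v₁v₃ + (λ₄-λ₂)v₄v₂ = 0`, `(λ₁-λ₄)v₁v₄ + (λ₂-λ₃)v₂v₃ = 0`
and all `vⱼ ≠ 0`, then `λ₁ = λ₂ = λ₃ = λ₄`. -/
theorem eigenvalues_all_equal
    (l1 l2 l3 l4 v1 v2 v3 v4 : ℝ)
    (h1 : (l1 - l2) * v1 * v2 + (l3 - l4) * v3 * v4 = 0)
    (h2 : (l1 - l3) * v1 * v3 + (l4 - l2) * v4 * v2 = 0)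
    (h3 : (l1 - l4) * v1 * v4 + (l2 - l3) * v2 * v3 = 0)
    (hv1 : v1 ≠ 0) (hv2 : v2 ≠ 0) (hv3 : v3 ≠ 0) (hv4 : v4 ≠ 0) :
    l1 = l2 ∧ l2 = l3 ∧ l3 = l4 := by
  have key : ((l1 - l2) * v1 * v2)^2 + ((l3 - l4) * v3 * v4)^2
      + ((l1 - l3) * v1 * v3)^2 + ((l4 - l2) * v4 * v2)^2
      + ((l1 - l4) * v1 * v4)^2 + ((l2 - l3) * v2 * v3)^2 = 0 := by
    nlinarith [sq_nonneg ((l1 - l2) * v1 * v2 + (l3 - l4) * v3 * v4),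
      sq_nonneg ((l1 - l3) * v1 * v3 + (l4 - l2) * v4 * v2),
      sq_nonneg ((l1 - l4) * v1 * v4 + (l2 - l3) * v2 * v3)]
  have e12 : (l1 - l2) * v1 * v2 = 0 := by nlinarith [sq_nonneg ((l3 - l4) * v3 * v4), sq_nonneg ((l1 - l3) * v1 * v3), sq_nonneg ((l4 - l2) * v4 * v2), sq_nonneg ((l1 - l4) * v1 * v4), sq_nonneg ((l2 - l3) * v2 * v3), sq_nonneg ((l1 - l2) * v1 * v2)]
  have e13 : (l1 - l3) * v1 * v3 = 0 := by nlinarith [sq_nonneg ((l3 - l4) * v3 * v4), sq_nonneg ((l1 - l2) * v1 * v2), sq_nonneg ((l4 - l2) * v4 * v2), sq_nonneg ((l1 - l4) * v1 * v4), sq_nonneg ((l2 - l3) * v2 * v3), sq_nonneg ((l1 - l3) * v1 * v3)]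
  have e14 : (l1 - l4) * v1 * v4 = 0 := by nlinarith [sq_nonneg ((l3 - l4) * v3 * v4), sq_nonneg ((l1 - l2) * v1 * v2), sq_nonneg ((l4 - l2) * v4 * v2), sq_nonneg ((l1 - l3) * v1 * v3), sq_nonneg ((l2 - l3) * v2 * v3), sq_nonneg ((l1 - l4) * v1 * v4)]
  have h12 : l1 = l2 := by
    rcases mul_eq_zero.mp e12 with h | h
    · rcases mul_eq_zero.mp h with h | h
      · linarith [sub_eq_zero.mp h]
      · exact absurd h hv1
    · exact absurd h hv2
  have h13 : l1 = l3 := by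
    rcases mul_eq_zero.mp e13 with h | h
    · rcases mul_eq_zero.mp h with h | h
      · linarith [sub_eq_zero.mp h]
      · exact absurd h hv1
    · exact absurd h hv3
  have h14 : l1 = l4 := by
    rcases mul_eq_zero.mp e14 with h | h
    · rcases mul_eq_zero.mp h with h | h
      · linarith [sub_eq_zero.mp h]
      · exact absurd h hv1
    · exact absurd h hv4
  exact ⟨h12, h12 ▸ h13, h13 ▸ h14⟩
end

section
/- Let $\lambda_1,\lambda_2,\lambda_3,\lambda_4, v_1,v_2,v_3,v_4 \in \mathbb{R}$ satisfy the three equations $(\lambda_1-\lambda_2)v_1v_2+(\lambda_3-\lambda_4)v_3v_4=0$, $(\lambda_1-\lambda_3)v_1v_3+(\lambda_4-\lambda_2)v_4v_2=0$, $(\lambda_1-\lambda_4)v_1v_4+(\lambda_2-\lambda_3)v_2v_3=0$, with $(v_1,v_2,v_3,v_4)\neq 0$. Then the vector $v=(v_1,v_2,v_3,v_4)$ is an eigenvector of the diagonal matrix $\mathrm{diag}(\lambda_1,\lambda_2,\lambda_3,\lambda_4)$. -/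
/-- Under the same three equations, with `v ≠ 0`, the vector
`v = (v₁,v₂,v₃,v₄)` is an eigenvector of `diag(λ₁,λ₂,λ₃,λ₄)`:
there is `μ` with `diag(λ) *ᵥ v = μ • v`. -/
theorem gradient_is_eigenvector
    (l v : Fin 4 → ℝ)
    (h1 : (l 0 - l 1) * v 0 * v 1 + (l 2 - l 3) * v 2 * v 3 = 0)
    (h2 : (l 0 - l 2) * v 0 * v 2 + (l 3 - l 1) * v 3 * v 1 = 0)
    (h3 : (l 0 - l 3) * v 0 * v 3 + (l 1 - l 2) * v 1 * v 2 = 0)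
    (hv : v ≠ 0) :
    ∃ μ : ℝ, (Matrix.diagonal l).mulVec v = μ • v := by
  -- the "generic" determinant identities
  have key01 : (l 0 - l 1) * (v 0 * v 1 * v 2 * v 3) *
      (v 0 ^ 2 + v 1 ^ 2 + v 2 ^ 2 + v 3 ^ 2) = 0 := by
    linear_combination (v 2 * v 3 * (v 0 ^ 2 + v 1 ^ 2)) * h1 +
      (v 2 * v 3 * (v 0 * v 3 + v 1 * v 2)) * h2 +
      (v 2 * v 3 * (v 1 * v 3 - v 0 * v 2)) * h3
  have key02 : (l 0 - l 2) * (v 0 * v 1 * v 2 * v 3) *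
      (v 0 ^ 2 + v 1 ^ 2 + v 2 ^ 2 + v 3 ^ 2) = 0 := by
    linear_combination (v 1 * v 3 * (v 1 * v 2 - v 0 * v 3)) * h1 +
      (v 1 * v 3 * (v 0 ^ 2 + v 2 ^ 2)) * h2 +
      (v 1 * v 3 * (v 0 * v 1 + v 2 * v 3)) * h3
  have key03 : (l 0 - l 3) * (v 0 * v 1 * v 2 * v 3) *
      (v 0 ^ 2 + v 1 ^ 2 + v 2 ^ 2 + v 3 ^ 2) = 0 := by
    linear_combination (v 1 * v 2 * (v 1 * v 3 + v 0 * v 2)) * h1 +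
      (v 1 * v 2 * (v 2 * v 3 - v 0 * v 1)) * h2 +
      (v 1 * v 2 * (v 0 ^ 2 + v 3 ^ 2)) * h3
  -- the pairwise facts
  have e01 : (l 0 - l 1) * v 0 * v 1 = 0 := by
    by_cases h0 : v 0 = 0
    · rw [h0]; ring
    by_cases hb : v 1 = 0
    · rw [hb]; ring
    by_cases hc : v 2 = 0
    · linear_combination h1 + (l 3 - l 2) * v 3 * hc
    by_cases hd : v 3 = 0
    · linear_combination h1 + (l 3 - l 2) * v 2 * hd
    have hP : v 0 * v 1 * v 2 * v 3 ≠ 0 :=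
      mul_ne_zero (mul_ne_zero (mul_ne_zero h0 hb) hc) hd
    have hN : (0:ℝ) < v 0 ^ 2 + v 1 ^ 2 + v 2 ^ 2 + v 3 ^ 2 := by
      have := mul_self_pos.mpr h0
      nlinarith [sq_nonneg (v 1), sq_nonneg (v 2), sq_nonneg (v 3)]
    rcases mul_eq_zero.mp key01 with h | h
    · rcases mul_eq_zero.mp h with h' | h'
      · rw [h']; ring
      · exact absurd h' hP
    · exact absurd h hN.ne'
  have e02 : (l 0 - l 2) * v 0 * v 2 = 0 := by
    by_cases h0 : v 0 = 0
    · rw [h0]; ring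
    by_cases hc : v 2 = 0
    · rw [hc]; ring
    by_cases hb : v 1 = 0
    · linear_combination h2 + (l 1 - l 3) * v 3 * hb
    by_cases hd : v 3 = 0
    · linear_combination h2 + (l 1 - l 3) * v 1 * hd
    have hP : v 0 * v 1 * v 2 * v 3 ≠ 0 :=
      mul_ne_zero (mul_ne_zero (mul_ne_zero h0 hb) hc) hd
    have hN : (0:ℝ) < v 0 ^ 2 + v 1 ^ 2 + v 2 ^ 2 + v 3 ^ 2 := by
      have := mul_self_pos.mpr h0
      nlinarith [sq_nonneg (v 1), sq_nonneg (v 2), sq_nonneg (v 3)]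
    rcases mul_eq_zero.mp key02 with h | h
    · rcases mul_eq_zero.mp h with h' | h'
      · rw [h']; ring
      · exact absurd h' hP
    · exact absurd h hN.ne'
  have e03 : (l 0 - l 3) * v 0 * v 3 = 0 := by
    by_cases h0 : v 0 = 0
    · rw [h0]; ring
    by_cases hd : v 3 = 0
    · rw [hd]; ring
    by_cases hb : v 1 = 0
    · linear_combination h3 + (l 2 - l 1) * v 2 * hb
    by_cases hc : v 2 = 0
    · linear_combination h3 + (l 2 - l 1) * v 1 * hc
    have hP : v 0 * v 1 * v 2 * v 3 ≠ 0 :=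
      mul_ne_zero (mul_ne_zero (mul_ne_zero h0 hb) hc) hd
    have hN : (0:ℝ) < v 0 ^ 2 + v 1 ^ 2 + v 2 ^ 2 + v 3 ^ 2 := by
      have := mul_self_pos.mpr h0
      nlinarith [sq_nonneg (v 1), sq_nonneg (v 2), sq_nonneg (v 3)]
    rcases mul_eq_zero.mp key03 with h | h
    · rcases mul_eq_zero.mp h with h' | h'
      · rw [h']; ring
      · exact absurd h' hP
    · exact absurd h hN.ne'
  have e23 : (l 2 - l 3) * v 2 * v 3 = 0 := by linear_combination h1 - e01
  have e13 : (l 1 - l 3) * v 1 * v 3 = 0 := by linear_combination -h2 + e02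
  have e12 : (l 1 - l 2) * v 1 * v 2 = 0 := by linear_combination h3 - e03
  have e10 : (l 1 - l 0) * v 1 * v 0 = 0 := by linear_combination -e01
  have e20 : (l 2 - l 0) * v 2 * v 0 = 0 := by linear_combination -e02
  have e30 : (l 3 - l 0) * v 3 * v 0 = 0 := by linear_combination -e03
  have e21 : (l 2 - l 1) * v 2 * v 1 = 0 := by linear_combination -e12
  have e31 : (l 3 - l 1) * v 3 * v 1 = 0 := by linear_combination -e13
  have e32 : (l 3 - l 2) * v 3 * v 2 = 0 := by linear_combination -e23
  have ediag : ∀ m : Fin 4, (l m - l m) * v m * v m = 0 := fun m => by ring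
  have hkey : ∀ j k : Fin 4, (l j - l k) * v j * v k = 0 := by
    intro j k
    fin_cases j <;> fin_cases k <;>
      first
        | exact ediag _
        | exact e01 | exact e10 | exact e02 | exact e20 | exact e03 | exact e30
        | exact e12 | exact e21 | exact e13 | exact e31 | exact e23 | exact e32
  obtain ⟨i, hi⟩ := Function.ne_iff.mp hv
  have hi : v i ≠ 0 := by simpa using hi
  refine ⟨l i, ?_⟩
  funext j
  simp only [Matrix.mulVec_diagonal, Pi.smul_apply, smul_eq_mul]
  by_cases hj : v j = 0
  · rw [hj]; ring
  · have h := hkey i j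
    have hsub : l i - l j = 0 := by
      rcases mul_eq_zero.mp h with h' | h'
      · rcases mul_eq_zero.mp h' with h'' | h''
        · exact h''
        · exact absurd h'' hi
      · exact absurd h' hj
    linear_combination (-(v j)) * hsub
end

section
/- Let $(M^4,g,f)$ be a 4-dimensional Miao-Tam critical metric with $\mathrm{div}(W^+)=0$. Then at every point, in an orthonormal frame diagonalizing Ricci, $(R_{ik}\nabla_j f - R_{jk}\nabla_i f)\nabla_k f + (R_{\bar i k}\nabla_{\bar j} f - R_{\bar j k}\nabla_{\bar i} f)\nabla_k f = 0$, where $(\bar i,\bar j)$ is the dual index pair of $(i,j)$. -/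
/-- The dual index pair: `(r,s,r̄,s̄)` is an even permutation of `(0,1,2,3)`
(zero-based indexing of `(1,2,3,4)`); diagonal pairs are sent to themselves. -/
def dualPair (i j : Fin 4) : Fin 4 × Fin 4 :=
  match i.val, j.val with
  | 0, 1 => (2, 3) | 0, 2 => (3, 1) | 0, 3 => (1, 2)
  | 1, 0 => (3, 2) | 1, 2 => (0, 3) | 1, 3 => (2, 0)
  | 2, 0 => (1, 3) | 2, 1 => (3, 0) | 2, 3 => (0, 1)
  | 3, 0 => (2, 1) | 3, 1 => (0, 2) | 3, 2 => (1, 0)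
  | _, _ => (i, j)

/-- For a 4-dimensional Miao-Tam critical metric with
`div(W⁺) = 0`, at every point, in an orthonormal frame diagonalizing Ricci,
`(R_ik∇ⱼf - R_jk∇ᵢf)∇ₖf + (R_īk∇_j̄f - R_j̄k∇_īf)∇ₖf = 0`.
The identities `fC_ijk = T_ijk + W_ijkl∇ₗf`, `T_ijk∇ₖf = R_ik∇ⱼf∇ₖf - R_jk∇ᵢf∇ₖf`,
the antisymmetry of `W` in its last two indices, and `C_ijk + C_īj̄k = 0`
(equivalent to `div(W⁺)=0`) are assumed. -/
theorem miao_tam_main_equation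
    (ric : Fin 4 → Fin 4 → ℝ) (f : ℝ) (df : Fin 4 → ℝ)
    (C T : Fin 4 → Fin 4 → Fin 4 → ℝ)
    (W : Fin 4 → Fin 4 → Fin 4 → Fin 4 → ℝ)
    (hdiag : ∀ i j, i ≠ j → ric i j = 0)
    (hfC : ∀ i j k, f * C i j k = T i j k + ∑ l, W i j k l * df l)
    (hT : ∀ i j, ∑ k, T i j k * df k
      = ∑ k, (ric i k * df j - ric j k * df i) * df k)
    (hWanti : ∀ i j k l, W i j k l = - W i j l k)
    (hdivWp : ∀ i j k, C i j k + C (dualPair i j).1 (dualPair i j).2 k = 0) :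
    ∀ i j, (∑ k, (ric i k * df j - ric j k * df i) * df k)
      + (∑ k, (ric (dualPair i j).1 k * df (dualPair i j).2
          - ric (dualPair i j).2 k * df (dualPair i j).1) * df k) = 0 := by
  intro i j
  have hW0 : ∀ a b, ∑ k, ∑ l, W a b k l * df l * df k = 0 := by
    intro a b
    have h : (∑ k, ∑ l, W a b k l * df l * df k)
        = ∑ k, ∑ l, -(W a b k l * df l * df k) := by
      conv_lhs => rw [Finset.sum_comm]
      refine Finset.sum_congr rfl fun x _ => Finset.sum_congr rfl fun y _ => ?_
      rw [hWanti a b y x]; ring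
    simp only [Finset.sum_neg_distrib] at h
    linarith
  have key : ∀ a b, ∑ k, T a b k * df k = f * ∑ k, C a b k * df k := by
    intro a b
    have h : ∑ k, (f * C a b k) * df k
        = ∑ k, (T a b k + ∑ l, W a b k l * df l) * df k :=
      Finset.sum_congr rfl fun k _ => by rw [hfC]
    have h2 : ∑ k, (T a b k + ∑ l, W a b k l * df l) * df k
        = (∑ k, T a b k * df k) + ∑ k, ∑ l, W a b k l * df l * df k := by
      rw [← Finset.sum_add_distrib]
      refine Finset.sum_congr rfl fun k _ => ?_
      rw [add_mul, Finset.sum_mul]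
    rw [h2, hW0, add_zero] at h
    rw [← h, Finset.mul_sum]
    exact Finset.sum_congr rfl fun k _ => by ring
  rw [← hT i j, ← hT (dualPair i j).1 (dualPair i j).2, key, key,
    ← mul_add, ← Finset.sum_add_distrib]
  have hz : ∀ k ∈ Finset.univ, C i j k * df k
      + C (dualPair i j).1 (dualPair i j).2 k * df k = (0:ℝ) := by
    intro k _
    rw [← add_mul, hdivWp, zero_mul]
  rw [Finset.sum_congr rfl hz, Finset.sum_const_zero, mul_zero]
end
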